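/- arXiv:1201.0533 — 2 statements merged into one kernel-verified Lean document; each statement's English description precedes it below -/
import Mathlib

section
/- Let {X_k, F_k}_{k≥0} be a discrete-time real-valued conditionally symmetric martingale with jumps ξ_k = X_k − X_{k−1}, and let m be a positive even integer. Assume almost surely, for every k ≥ 1, |ξ_k| ≤ d and E[ξ_k^l | F_{k−1}] ≤ μ_l for every even l ∈ {2, 4, …, m}, for some d > 0 and nonnegative μ_2, …, μ_m. Set γ_{2l} = μ_{2l}/d^{2l}. Then for every t ∈ ℝ and n ≥ 1, E[ exp( t Σ_{k=1}^n ξ_k ) ] ≤ ( 1 + Σ_{l=1}^{m/2−1} (td)^{2l} (γ_{2l} − γ_m)/(2l)! + γ_m (cosh(td) − 1) )^n. -/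
/-!
Conditional symmetry kills the odd part of `exp (t ξₖ)`, so `E[exp (t ξₖ) | Fₖ₋₁]` equals
`E[cosh (t ξₖ) | Fₖ₋₁]`. For `|u| ≤ 1` every term of order `≥ 2M` of the series of `cosh (s u)` is
at most `u ^ (2M)` times the same term of `cosh s`, so `cosh (t ξₖ)` is dominated by an even
polynomial in `ξₖ / d` with nonnegative coefficients, whose conditional expectation is controlled
by the moment bounds. Conditioning successively on `Fₙ₋₁, Fₙ₋₂, …` multiplies these one-step bounds.
-/

open MeasureTheory ProbabilityTheory Filter Set
open Real Finset Nat

lemma sum_range_le_cosh (s : ℝ) (M : ℕ) :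
    ∑ l ∈ range M, s ^ (2 * l) / (2 * l)! ≤ cosh s :=
  sum_le_hasSum _ (fun l _ => by rw [pow_mul]; positivity) (hasSum_cosh s)

lemma cosh_mul_le_sum_add_mul_pow (s : ℝ) {u : ℝ} (hu : |u| ≤ 1) (M : ℕ) :
    cosh (s * u) ≤ ∑ l ∈ range M, s ^ (2 * l) / (2 * l)! * u ^ (2 * l)
      + (cosh s - ∑ l ∈ range M, s ^ (2 * l) / (2 * l)!) * u ^ (2 * M) := by
  have hterm : ∀ l, (s * u) ^ (2 * l) / (2 * l)! = s ^ (2 * l) / (2 * l)! * u ^ (2 * l) :=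
    fun l => by rw [mul_pow]; ring
  have htail := (hasSum_nat_add_iff' M).2 (hasSum_cosh (s * u))
  have htail' := ((hasSum_nat_add_iff' M).2 (hasSum_cosh s)).mul_right (u ^ (2 * M))
  simp only [hterm] at htail
  have hu2 : u ^ 2 ≤ 1 := by nlinarith [abs_nonneg u, sq_abs u]
  have hmono : ∀ l, M ≤ l → u ^ (2 * l) ≤ u ^ (2 * M) := fun l hl => by
    simpa only [pow_mul] using pow_le_pow_of_le_one (sq_nonneg u) hu2 hl
  have hcoeff : ∀ l, 0 ≤ s ^ (2 * l) / (2 * l)! := fun l => by rw [pow_mul]; positivity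
  linarith [hasSum_le (fun i => mul_le_mul_of_nonneg_left (hmono (i + M) (by omega)) (hcoeff _))
    htail htail']
lemma sum_range_mul_add_sub_mul_eq {M : ℕ} (hM : 1 ≤ M) (a γ : ℕ → ℝ) (c : ℝ) :
    ∑ l ∈ range M, a l * γ l + (c - ∑ l ∈ range M, a l) * γ M
      = a 0 * γ 0 + ∑ l ∈ Finset.Icc 1 (M - 1), a l * (γ l - γ M) + γ M * (c - a 0) := by
  have hrange : range M = insert 0 (Finset.Icc 1 (M - 1)) := by
    ext l; simp only [Finset.mem_range, Finset.mem_insert, Finset.mem_Icc]; omega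
  rw [hrange, sum_insert (by simp), sum_insert (by simp)]
  simp only [mul_sub, sum_sub_distrib, ← sum_mul]
  ring

section

variable {Ω : Type*} {m0 : MeasurableSpace Ω} {μ : Measure Ω}

lemma integrable_comp_of_abs_le [IsFiniteMeasure μ] {ξ : Ω → ℝ} (hξ : AEStronglyMeasurable ξ μ)
    {C : ℝ} (hC : ∀ᵐ ω ∂μ, |ξ ω| ≤ C) {g : ℝ → ℝ} (hg : Continuous g) :
    Integrable (fun ω => g (ξ ω)) μ := by
  obtain ⟨K, hK⟩ := (isCompact_Icc (a := -C) (b := C)).exists_bound_of_continuousOn hg.continuousOn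
  exact .of_bound (hg.comp_aestronglyMeasurable hξ) K (hC.mono fun ω hω => hK _ (abs_le.1 hω))

lemma condExp_const_mul_le {m : MeasurableSpace Ω} {f : Ω → ℝ} {b c : ℝ} (hc : 0 ≤ c)
    (hf : μ[f|m] ≤ᵐ[μ] fun _ => b) : μ[fun ω => c * f ω|m] ≤ᵐ[μ] fun _ => c * b := by
  filter_upwards [condExp_smul (μ := μ) c f m, hf] with ω hω hfω
  rw [Pi.smul_apply, smul_eq_mul] at hω
  exact hω.trans_le (mul_le_mul_of_nonneg_left hfω hc)

lemma condExp_sum_mul_le {ι : Type*} {m : MeasurableSpace Ω} (s : Finset ι) {f : ι → Ω → ℝ}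
    {b c : ι → ℝ} (hc : ∀ i ∈ s, 0 ≤ c i) (hf : ∀ i ∈ s, Integrable (f i) μ)
    (hb : ∀ i ∈ s, μ[f i|m] ≤ᵐ[μ] fun _ => b i) :
    μ[fun ω => ∑ i ∈ s, c i * f i ω|m] ≤ᵐ[μ] fun _ => ∑ i ∈ s, c i * b i := by
  have hsum : (fun ω => ∑ i ∈ s, c i * f i ω) = ∑ i ∈ s, fun ω => c i * f i ω := by
    ext ω; simp
  have hterms : ∀ᵐ ω ∂μ, ∀ i ∈ s, (μ[fun ω => c i * f i ω|m]) ω ≤ c i * b i :=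
    (eventually_all_finset s).2 fun i hi => condExp_const_mul_le (hc i hi) (hb i hi)
  filter_upwards [hsum ▸ condExp_finsetSum (fun i hi => (hf i hi).const_mul (c i)) m, hterms]
    with ω hω hle
  rw [hω, Finset.sum_apply]
  exact sum_le_sum hle

lemma condExp_comp_eq_zero_of_odd {m : MeasurableSpace Ω} {ξ : Ω → ℝ} {g : ℝ → ℝ}
    (hodd : ∀ x, g (-x) = -g x)
    (hsymm : μ[fun ω => g (ξ ω)|m] =ᵐ[μ] μ[fun ω => g (-ξ ω)|m]) :
    μ[fun ω => g (ξ ω)|m] =ᵐ[μ] 0 := by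
  have hneg : (fun ω => g (-ξ ω)) = -fun ω => g (ξ ω) := by ext ω; simp [hodd]
  filter_upwards [hsymm.trans (hneg ▸ condExp_neg (μ := μ) _ m)] with ω hω
  simp only [Pi.neg_apply] at hω
  simp only [Pi.zero_apply]
  linarith

lemma condExp_exp_eq_condExp_cosh [IsFiniteMeasure μ] {ξ : Ω → ℝ}
    (hξ : AEStronglyMeasurable ξ μ) {C : ℝ} (hC : ∀ᵐ ω ∂μ, |ξ ω| ≤ C) {m : MeasurableSpace Ω}
    (hsymm : ∀ g : ℝ → ℝ, Measurable g →
      μ[fun ω => g (ξ ω)|m] =ᵐ[μ] μ[fun ω => g (-ξ ω)|m]) (t : ℝ) :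
    μ[fun ω => exp (t * ξ ω)|m] =ᵐ[μ] μ[fun ω => cosh (t * ξ ω)|m] := by
  have hsinh : μ[fun ω => sinh (t * ξ ω)|m] =ᵐ[μ] 0 :=
    condExp_comp_eq_zero_of_odd (g := fun x => sinh (t * x)) (by simp)
      (hsymm (fun x => sinh (t * x)) (by fun_prop))
  have hsplit : (fun ω => exp (t * ξ ω))
      = (fun ω => cosh (t * ξ ω)) + fun ω => sinh (t * ξ ω) := by
    ext ω; simp [cosh_add_sinh]
  rw [hsplit]
  filter_upwards [condExp_add (integrable_comp_of_abs_le hξ hC (g := fun x => cosh (t * x))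
    (by fun_prop)) (integrable_comp_of_abs_le hξ hC (g := fun x => sinh (t * x)) (by fun_prop)) m,
    hsinh] with ω hω hω'
  simp [hω, hω']

lemma condExp_cosh_mul_le [IsFiniteMeasure μ] {u : Ω → ℝ} (hu : AEStronglyMeasurable u μ)
    (hu1 : ∀ᵐ ω ∂μ, |u ω| ≤ 1) {m : MeasurableSpace Ω} (s : ℝ) {M : ℕ} {γ : ℕ → ℝ}
    (hγ : ∀ l ≤ M, μ[fun ω => u ω ^ (2 * l)|m] ≤ᵐ[μ] fun _ => γ l) :
    μ[fun ω => cosh (s * u ω)|m] ≤ᵐ[μ] fun _ =>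
      ∑ l ∈ range M, s ^ (2 * l) / (2 * l)! * γ l
        + (cosh s - ∑ l ∈ range M, s ^ (2 * l) / (2 * l)!) * γ M := by
  set R := cosh s - ∑ l ∈ range M, s ^ (2 * l) / (2 * l)!
  have hpow : ∀ l, Integrable (fun ω => u ω ^ (2 * l)) μ :=
    fun l => integrable_comp_of_abs_le hu hu1 (continuous_pow _)
  have hpoly : Integrable (fun ω => ∑ l ∈ range M, s ^ (2 * l) / (2 * l)! * u ω ^ (2 * l)) μ :=
    integrable_finsetSum _ fun l _ => (hpow l).const_mul _
  have hmaj := condExp_mono (m := m)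
    (integrable_comp_of_abs_le hu hu1 (g := fun x => cosh (s * x)) (by fun_prop))
    (hpoly.add ((hpow M).const_mul R))
    (hu1.mono fun ω hω => (cosh_mul_le_sum_add_mul_pow s hω M : _))
  have hpoly_le := condExp_sum_mul_le (m := m) (range M) (c := fun l => s ^ (2 * l) / (2 * l)!)
    (fun l _ => by rw [pow_mul]; positivity) (fun l _ => hpow l) (fun l hl => hγ l (mem_range.1 hl).le)
  have hlast_le := condExp_const_mul_le (sub_nonneg.2 (sum_range_le_cosh s M)) (hγ M le_rfl)
  filter_upwards [hmaj, condExp_add hpoly ((hpow M).const_mul R) m, hpoly_le, hlast_le]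
    with ω hmajω haddω hpolyω hlastω
  refine hmajω.trans ?_
  rw [haddω, Pi.add_apply]
  exact add_le_add hpolyω hlastω

lemma integral_mul_le_of_condExp_le {m : MeasurableSpace Ω} (hm : m ≤ m0)
    [SigmaFinite (μ.trim hm)] {f g : Ω → ℝ} {B : ℝ} (hf : StronglyMeasurable[m] f)
    (hf0 : 0 ≤ᵐ[μ] f) (hfi : Integrable f μ) (hg : Integrable g μ) (hfg : Integrable (f * g) μ)
    (hB : μ[g|m] ≤ᵐ[μ] fun _ => B) :
    ∫ ω, f ω * g ω ∂μ ≤ (∫ ω, f ω ∂μ) * B := by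
  have hprod : μ[f * g|m] =ᵐ[μ] f * μ[g|m] := condExp_mul_of_stronglyMeasurable_left hf hfg hg
  calc ∫ ω, f ω * g ω ∂μ = ∫ ω, (μ[f * g|m]) ω ∂μ := (integral_condExp hm).symm
    _ = ∫ ω, f ω * (μ[g|m]) ω ∂μ := integral_congr_ae hprod
    _ ≤ ∫ ω, f ω * B ∂μ := by
      refine integral_mono_ae (integrable_condExp.congr hprod) (hfi.mul_const B) ?_
      filter_upwards [hf0, hB] with ω hf0ω hBω
      exact mul_le_mul_of_nonneg_left hBω hf0ω
    _ = (∫ ω, f ω ∂μ) * B := integral_mul_const B f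

theorem integral_exp_sum_le_pow [IsProbabilityMeasure μ] {F : Filtration ℕ m0}
    {ξ : ℕ → Ω → ℝ} (hξ : StronglyAdapted F ξ) {C B : ℝ} (hC : ∀ k, 1 ≤ k → ∀ᵐ ω ∂μ, ξ k ω ≤ C)
    (hB : ∀ k, 1 ≤ k → μ[fun ω => exp (ξ k ω)|F (k - 1)] ≤ᵐ[μ] fun _ => B) (n : ℕ) :
    ∫ ω, exp (∑ k ∈ Icc 1 n, ξ k ω) ∂μ ≤ B ^ n := by
  have hB0 : 0 ≤ B := by
    have h : ∀ᵐ _ ∂μ, 0 ≤ B := by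
      filter_upwards [condExp_nonneg (ae_of_all μ fun ω => (exp_pos (ξ 1 ω)).le), hB 1 le_rfl]
        with ω h0 hle
      exact h0.trans hle
    exact h.exists.elim fun _ => id
  have hS : ∀ j, StronglyMeasurable[F j] fun ω => ∑ k ∈ Icc 1 j, ξ k ω := fun j =>
    Finset.stronglyMeasurable_fun_sum _ fun k hk => (hξ k).mono (F.mono (mem_Icc.1 hk).2)
  have hexp_le : ∀ {f : Ω → ℝ} {c : ℝ}, (∀ᵐ ω ∂μ, f ω ≤ c) → ∀ᵐ ω ∂μ, ‖exp (f ω)‖ ≤ exp c :=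
    fun hf => hf.mono fun ω hω => by rwa [norm_of_nonneg (exp_pos _).le, exp_le_exp]
  have hint : ∀ j, Integrable (fun ω => exp (∑ k ∈ Icc 1 j, ξ k ω)) μ := by
    refine fun j => .of_bound (continuous_exp.comp_aestronglyMeasurable
      ((hS j).mono (F.le j)).aestronglyMeasurable) _ (hexp_le (c := j * C) ?_)
    filter_upwards [(eventually_all_finset (Icc 1 j)).2 fun k hk => hC k (mem_Icc.1 hk).1]
      with ω hω
    simpa using sum_le_card_nsmul _ _ _ hω
  induction n with
  | zero => simp
  | succ j ih =>
    have hsplit : (fun ω => exp (∑ k ∈ Icc 1 (j + 1), ξ k ω))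
        = (fun ω => exp (∑ k ∈ Icc 1 j, ξ k ω)) * fun ω => exp (ξ (j + 1) ω) := by
      ext ω; simp [sum_Icc_succ_top (Nat.le_add_left 1 j), exp_add]
    have hint_step : Integrable (fun ω => exp (ξ (j + 1) ω)) μ :=
      .of_bound (continuous_exp.comp_aestronglyMeasurable
        ((hξ (j + 1)).mono (F.le _)).aestronglyMeasurable) _ (hexp_le (hC (j + 1) (by omega)))
    calc ∫ ω, exp (∑ k ∈ Icc 1 (j + 1), ξ k ω) ∂μ
        = ∫ ω, exp (∑ k ∈ Icc 1 j, ξ k ω) * exp (ξ (j + 1) ω) ∂μ := by rw [hsplit]; rfl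
      _ ≤ (∫ ω, exp (∑ k ∈ Icc 1 j, ξ k ω) ∂μ) * B :=
        integral_mul_le_of_condExp_le (F.le j) (continuous_exp.comp_stronglyMeasurable (hS j))
          (ae_of_all μ fun _ => (exp_pos _).le) (hint j) hint_step (hsplit ▸ hint (j + 1)) (hB (j + 1) (by omega))
      _ ≤ B ^ j * B := by gcongr
      _ = B ^ (j + 1) := (pow_succ B j).symm

lemma condExp_exp_le_of_symmetric_of_moments [IsFiniteMeasure μ] {ξ : Ω → ℝ}
    (hξ : AEStronglyMeasurable ξ μ) {d : ℝ} (hd : 0 < d) (hbdd : ∀ᵐ ω ∂μ, |ξ ω| ≤ d) {m : MeasurableSpace Ω} (hm : m ≤ m0)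
    (hsymm : ∀ g : ℝ → ℝ, Measurable g →
      μ[fun ω => g (ξ ω)|m] =ᵐ[μ] μ[fun ω => g (-ξ ω)|m])
    {M : ℕ} (hM : 1 ≤ M) {ν : ℕ → ℝ}
    (hν : ∀ l, 1 ≤ l → l ≤ M → μ[fun ω => ξ ω ^ (2 * l)|m] ≤ᵐ[μ] fun _ => ν l) (t : ℝ) :
    μ[fun ω => exp (t * ξ ω)|m] ≤ᵐ[μ] fun _ =>
      1 + ∑ l ∈ Finset.Icc 1 (M - 1),
          (t * d) ^ (2 * l) * (ν l / d ^ (2 * l) - ν M / d ^ (2 * M)) / (2 * l)!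
        + ν M / d ^ (2 * M) * (cosh (t * d) - 1) := by
  -- `γ l` bounds the `2l`-th conditional moment of `ξ / d`, the zeroth one being `1`
  set γ : ℕ → ℝ := fun l => if l = 0 then 1 else ν l / d ^ (2 * l)
  have hu1 : ∀ᵐ ω ∂μ, |ξ ω / d| ≤ 1 :=
    hbdd.mono fun ω hω => by rwa [abs_div, abs_of_pos hd, div_le_one hd]
  have hγ : ∀ l ≤ M, μ[fun ω => (ξ ω / d) ^ (2 * l)|m] ≤ᵐ[μ] fun _ => γ l := by
    intro l hl
    rcases Nat.eq_zero_or_pos l with rfl | hl0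
    · simp only [γ, mul_zero, pow_zero, if_true, condExp_const hm]
      exact ae_of_all μ fun _ => le_rfl
    · have h := condExp_const_mul_le (inv_nonneg.2 (pow_pos hd (2 * l)).le) (hν l hl0 hl)
      simpa [γ, hl0.ne', div_eq_inv_mul, mul_pow, inv_pow] using h
  have hscale : (fun ω => cosh (t * ξ ω)) = fun ω => cosh (t * d * (ξ ω / d)) := by
    ext ω; field_simp
  have hcosh := condExp_cosh_mul_le
    ((continuous_id.div_const d).comp_aestronglyMeasurable hξ) hu1 (t * d) hγ
  filter_upwards [condExp_exp_eq_condExp_cosh hξ hbdd hsymm t, hscale ▸ hcosh]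
    with ω hexp hcoshω
  rw [hexp]
  refine hcoshω.trans_eq ?_
  have hγ0 : γ 0 = 1 := if_pos rfl
  have hγM : γ M = ν M / d ^ (2 * M) := if_neg (by omega)
  rw [sum_range_mul_add_sub_mul_eq hM, hγ0, hγM]
  simp only [Nat.mul_zero, pow_zero, factorial_zero, cast_one, div_one, one_mul]
  congr 2
  refine Finset.sum_congr rfl fun l hl => ?_
  rw [show γ l = ν l / d ^ (2 * l) from if_neg (by simp at hl; omega)]
  ring

end

theorem conditionally_symmetric_mgf_moment_bound_general
    {Ω : Type*} {m0 : MeasurableSpace Ω} {μ : Measure Ω} [IsProbabilityMeasure μ]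
    {F : Filtration ℕ m0} {X : ℕ → Ω → ℝ}
    (hmart : Martingale X F μ)
    (hsymm : ∀ k : ℕ, 1 ≤ k → ∀ g : ℝ → ℝ, Measurable g →
      μ[fun ω => g (X k ω - X (k - 1) ω) | F (k - 1)]
        =ᵐ[μ] μ[fun ω => g (-(X k ω - X (k - 1) ω)) | F (k - 1)])
    {m : ℕ} (hm_even : Even m) (hm_pos : 0 < m)
    {d : ℝ} (hd : 0 < d) {μmom : ℕ → ℝ}
    (hbdd : ∀ k : ℕ, 1 ≤ k → ∀ᵐ ω ∂μ, |X k ω - X (k - 1) ω| ≤ d)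
    (hmom : ∀ k : ℕ, 1 ≤ k → ∀ l, 1 ≤ l → l ≤ m / 2 → ∀ᵐ ω ∂μ,
      (μ[fun ω => (X k ω - X (k - 1) ω) ^ (2 * l) | F (k - 1)]) ω ≤ μmom (2 * l))
    (t : ℝ) (n : ℕ) :
    ∫ ω, Real.exp (t * ∑ k ∈ Finset.Icc 1 n, (X k ω - X (k - 1) ω)) ∂μ
      ≤ (1 + (∑ l ∈ Finset.Icc 1 (m / 2 - 1),
            (t * d) ^ (2 * l) * (μmom (2 * l) / d ^ (2 * l) - μmom m / d ^ m)
              / (Nat.factorial (2 * l)))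
          + (μmom m / d ^ m) * (Real.cosh (t * d) - 1)) ^ n := by
  obtain ⟨M, rfl⟩ := hm_even.two_dvd
  rw [Nat.mul_div_cancel_left M two_pos] at hmom ⊢
  have hincr : ∀ k, StronglyMeasurable[F k] fun ω => X k ω - X (k - 1) ω := fun k =>
    (hmart.stronglyAdapted k).sub ((hmart.stronglyAdapted (k - 1)).mono (F.mono (Nat.sub_le k 1)))
  have hstep := fun k (hk : 1 ≤ k) => condExp_exp_le_of_symmetric_of_moments
    ((hincr k).mono (F.le k)).aestronglyMeasurable hd (hbdd k hk) (F.le (k - 1)) (hsymm k hk)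
    (by omega : 1 ≤ M) (ν := fun l => μmom (2 * l)) (hmom k hk) t
  have hbdd' : ∀ k, 1 ≤ k → ∀ᵐ ω ∂μ, t * (X k ω - X (k - 1) ω) ≤ |t| * d := fun k hk =>
    (hbdd k hk).mono fun ω hω => (le_abs_self _).trans (by rw [abs_mul]; gcongr)
  simpa only [Finset.mul_sum] using
    integral_exp_sum_le_pow (fun k => (hincr k).const_mul t) hbdd' hstep n

/-- Inequality (21): for a conditionally symmetric martingale with jumps bounded by `d` and
conditional even moments `E[ξ_k^{2l} | F_{k−1}] ≤ μ_{2l}` for `l = 1, …, m/2`, setting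
`γ_{2l} = μ_{2l}/d^{2l}`, for every `t ∈ ℝ`,
`E[exp(t Σ_{k=1}^n ξ_k)] ≤ (1 + Σ_{l=1}^{m/2−1} (td)^{2l}(γ_{2l} − γ_m)/(2l)! + γ_m(cosh(td) − 1))^n`. -/
theorem conditionally_symmetric_mgf_moment_bound
    {Ω : Type*} {m0 : MeasurableSpace Ω} {μ : Measure Ω} [IsProbabilityMeasure μ]
    {F : Filtration ℕ m0} {X : ℕ → Ω → ℝ}
    (hmart : Martingale X F μ)
    (hsymm : ∀ k : ℕ, 1 ≤ k → ∀ g : ℝ → ℝ, Measurable g →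
      μ[fun ω => g (X k ω - X (k - 1) ω) | F (k - 1)]
        =ᵐ[μ] μ[fun ω => g (-(X k ω - X (k - 1) ω)) | F (k - 1)])
    {m : ℕ} (hm_even : Even m) (hm_pos : 0 < m)
    {d : ℝ} (hd : 0 < d) {μmom : ℕ → ℝ}
    (hμnonneg : ∀ l, 1 ≤ l → l ≤ m / 2 → 0 ≤ μmom (2 * l))
    (hbdd : ∀ k : ℕ, 1 ≤ k → ∀ᵐ ω ∂μ, |X k ω - X (k - 1) ω| ≤ d)
    (hmom : ∀ k : ℕ, 1 ≤ k → ∀ l, 1 ≤ l → l ≤ m / 2 → ∀ᵐ ω ∂μ,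
      (μ[fun ω => (X k ω - X (k - 1) ω) ^ (2 * l) | F (k - 1)]) ω ≤ μmom (2 * l))
    (t : ℝ) (n : ℕ) (hn : 1 ≤ n) :
    ∫ ω, Real.exp (t * ∑ k ∈ Finset.Icc 1 n, (X k ω - X (k - 1) ω)) ∂μ
      ≤ (1 + (∑ l ∈ Finset.Icc 1 (m / 2 - 1),
            (t * d) ^ (2 * l) * (μmom (2 * l) / d ^ (2 * l) - μmom m / d ^ m)
              / (Nat.factorial (2 * l)))
          + (μmom m / d ^ m) * (Real.cosh (t * d) - 1)) ^ n :=
  conditionally_symmetric_mgf_moment_bound_general hmart hsymm hm_even hm_pos hd hbdd hmom t n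
end

section
/- Let {X_n, F_n}_{n≥0} be a discrete-time real-valued conditionally symmetric martingale with jumps ξ_k = X_k − X_{k−1} ≤ 1 almost surely, set S_n = X_n − X_0 and Q_n = Σ_{k=1}^n E[ξ_k² | F_{k−1}] (Q_0 = 0). For constants λ ≥ 0 and θ ≥ cosh(λ) − 1, define U_n = exp(λ S_n − θ Q_n). Then {U_n, F_n}_{n≥0} is a supermartingale. -/
open MeasureTheory Set

/-!
Conditional symmetry replaces `E[e^{λξ} | F]` by `E[cosh(λξ) | F]` and, together with `ξ ≤ 1`,
forces `|ξ| ≤ 1`. For `|x| ≤ 1` the half-angle formula and the convexity of `sinh` on `[0, ∞)`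
give `cosh(λx) ≤ 1 + (cosh λ − 1) x²`, so `E[e^{λξ_k} | F_{k−1}] ≤ 1 + θ q_k ≤ e^{θ q_k}` with
`q_k = E[ξ_k² | F_{k−1}]`. Hence every factor `exp(λξ_k − θ q_k)` of `U_n` has conditional
expectation at most `1`, and a product of such nonnegative factors is a supermartingale.
-/

namespace Real

lemma convexOn_sinh : ConvexOn ℝ (Ici 0) sinh := by
  refine MonotoneOn.convexOn_of_deriv (convex_Ici 0) continuous_sinh.continuousOn
    differentiable_sinh.differentiableOn ?_
  rw [deriv_sinh, interior_Ici]
  intro x hx y hy hxy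
  rw [cosh_le_cosh, abs_of_pos hx, abs_of_pos hy]
  exact hxy

lemma sinh_mul_le {t a : ℝ} (ht₀ : 0 ≤ t) (ht₁ : t ≤ 1) (ha : 0 ≤ a) :
    sinh (t * a) ≤ t * sinh a := by
  simpa using convexOn_sinh.2 (mem_Ici.2 le_rfl) (mem_Ici.2 ha) (sub_nonneg.2 ht₁) ht₀
    (sub_add_cancel 1 t)

lemma cosh_mul_le_one_add_mul_sq {l x : ℝ} (hx : |x| ≤ 1) :
    cosh (l * x) ≤ 1 + (cosh l - 1) * x ^ 2 := by
  have half_angle : ∀ y, cosh y = 1 + 2 * sinh (y / 2) ^ 2 := fun y => by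
    have := cosh_two_mul (y / 2)
    rw [mul_div_cancel₀ y two_ne_zero] at this
    rw [this, cosh_sq]
    ring
  have hsinh : sinh (|x| * (|l| / 2)) ≤ |x| * sinh (|l| / 2) :=
    sinh_mul_le (abs_nonneg x) hx (by positivity)
  have hsinh₀ : 0 ≤ sinh (|x| * (|l| / 2)) := sinh_nonneg_iff.2 (by positivity)
  rw [← cosh_abs, abs_mul, ← cosh_abs l, half_angle, half_angle |l|, ← sq_abs x,
    mul_comm |l|, mul_div_assoc]
  nlinarith [pow_le_pow_left₀ hsinh₀ hsinh 2]

end Real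

section ConditionalSymmetry

variable {Ω : Type*} {m m0 : MeasurableSpace Ω} {μ : Measure[m0] Ω}

def CondSymmetric (m : MeasurableSpace Ω) (μ : Measure[m0] Ω) (ξ : Ω → ℝ) : Prop :=
  ∀ g : ℝ → ℝ, Measurable g → μ[fun ω => g (ξ ω) | m] =ᵐ[μ] μ[fun ω => g (-ξ ω) | m]

lemma integrable_comp_of_ae_abs_le [IsFiniteMeasure μ] {ξ : Ω → ℝ} {c : ℝ} {φ : ℝ → ℝ}
    (hφ : Continuous φ) (hξ : AEStronglyMeasurable ξ μ) (hbdd : ∀ᵐ ω ∂μ, |ξ ω| ≤ c) :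
    Integrable (fun ω => φ (ξ ω)) μ := by
  obtain ⟨C, hC⟩ := (isCompact_Icc (a := -c) (b := c)).exists_bound_of_continuousOn
    hφ.continuousOn
  refine Integrable.of_bound (hφ.comp_aestronglyMeasurable hξ) C ?_
  filter_upwards [hbdd] with ω hω
  exact hC _ (abs_le.1 hω)

namespace CondSymmetric

variable {ξ : Ω → ℝ}

lemma ae_abs_le [IsFiniteMeasure μ] (hm : m ≤ m0) (hsymm : CondSymmetric m μ ξ)
    (hξ : Integrable ξ μ) {c : ℝ} (hle : ∀ᵐ ω ∂μ, ξ ω ≤ c) : ∀ᵐ ω ∂μ, |ξ ω| ≤ c := by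
  set g : ℝ → ℝ := fun x => max (x - c) 0
  have hg : Measurable g := (measurable_id.sub measurable_const).max measurable_const
  have hg_ξ : (fun ω => g (ξ ω)) =ᵐ[μ] 0 := by
    filter_upwards [hle] with ω hω
    exact max_eq_right (sub_nonpos.2 hω)
  have hcond : μ[fun ω => g (-ξ ω) | m] =ᵐ[μ] 0 :=
    (hsymm g hg).symm.trans ((condExp_congr_ae hg_ξ).trans (by rw [condExp_zero]))
  have hint : ∫ ω, g (-ξ ω) ∂μ = 0 := by
    rw [← integral_condExp hm, integral_congr_ae hcond]
    simp
  have hg_negξ : (fun ω => g (-ξ ω)) =ᵐ[μ] 0 :=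
    (integral_eq_zero_iff_of_nonneg (fun ω => le_max_right _ _)
      ((hξ.neg.sub (integrable_const c)).pos_part)).1 hint
  filter_upwards [hle, hg_negξ] with ω hω hω'
  have : -ξ ω - c ≤ 0 := (le_max_left _ _).trans_eq hω'
  exact abs_le.2 ⟨by linarith, hω⟩

lemma condExp_exp_eq_condExp_cosh (hsymm : CondSymmetric m μ ξ) {l : ℝ}
    (hpos : Integrable (fun ω => Real.exp (l * ξ ω)) μ)
    (hneg : Integrable (fun ω => Real.exp (l * -ξ ω)) μ) :
    μ[fun ω => Real.exp (l * ξ ω) | m] =ᵐ[μ] μ[fun ω => Real.cosh (l * ξ ω) | m] := by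
  have hcosh : (fun ω => Real.cosh (l * ξ ω))
      = (2 : ℝ)⁻¹ • ((fun ω => Real.exp (l * ξ ω)) + fun ω => Real.exp (l * -ξ ω)) := by
    ext ω
    simp only [Pi.smul_apply, Pi.add_apply, smul_eq_mul, Real.cosh_eq, mul_neg]
    ring
  have hsym := hsymm (fun x => Real.exp (l * x)) (by fun_prop)
  rw [hcosh]
  filter_upwards [condExp_smul (m := m) (2 : ℝ)⁻¹
    ((fun ω => Real.exp (l * ξ ω)) + fun ω => Real.exp (l * -ξ ω)),
    condExp_add hpos hneg m, hsym] with ω h_smul h_add h_sym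
  rw [h_smul, Pi.smul_apply, h_add, Pi.add_apply, smul_eq_mul, ← h_sym]
  ring

lemma condExp_exp_le_exp_condExp_sq [IsFiniteMeasure μ] (hm : m ≤ m0)
    (hsymm : CondSymmetric m μ ξ) (hξ : AEStronglyMeasurable ξ μ) (hbdd : ∀ᵐ ω ∂μ, |ξ ω| ≤ 1)
    {l θ : ℝ} (hθ : Real.cosh l - 1 ≤ θ) :
    μ[fun ω => Real.exp (l * ξ ω) | m]
      ≤ᵐ[μ] fun ω => Real.exp (θ * μ[fun ω => ξ ω ^ 2 | m] ω) := by
  have hexp := integrable_comp_of_ae_abs_le (φ := fun x => Real.exp (l * x)) (by fun_prop) hξ hbdd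
  have hexp_neg :=
    integrable_comp_of_ae_abs_le (φ := fun x => Real.exp (l * -x)) (by fun_prop) hξ hbdd
  have hcosh := integrable_comp_of_ae_abs_le (φ := fun x => Real.cosh (l * x)) (by fun_prop) hξ hbdd
  have hsq := integrable_comp_of_ae_abs_le (φ := fun x => x ^ 2) (by fun_prop) hξ hbdd
  have hmono : μ[fun ω => Real.cosh (l * ξ ω) | m]
      ≤ᵐ[μ] μ[(fun _ => 1) + (Real.cosh l - 1) • (fun ω => ξ ω ^ 2) | m] := by
    refine condExp_mono hcosh ((integrable_const 1).add (hsq.smul _)) ?_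
    filter_upwards [hbdd] with ω hω
    exact Real.cosh_mul_le_one_add_mul_sq hω
  filter_upwards [hsymm.condExp_exp_eq_condExp_cosh hexp hexp_neg, hmono,
    condExp_add (integrable_const 1) (hsq.smul (Real.cosh l - 1)) m,
    condExp_smul (Real.cosh l - 1) (fun ω => ξ ω ^ 2) m,
    condExp_nonneg (m := m) (ae_of_all μ fun ω => sq_nonneg (ξ ω))]
    with ω h_cosh h_mono h_add h_smul h_nonneg
  rw [h_cosh]
  refine h_mono.trans ?_
  rw [h_add, Pi.add_apply, condExp_const hm, h_smul, Pi.smul_apply, smul_eq_mul]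
  calc 1 + (Real.cosh l - 1) * μ[fun ω => ξ ω ^ 2 | m] ω
      ≤ θ * μ[fun ω => ξ ω ^ 2 | m] ω + 1 := by
        linarith [mul_le_mul_of_nonneg_right hθ (h_nonneg : (0 : ℝ) ≤ _)]
    _ ≤ Real.exp (θ * μ[fun ω => ξ ω ^ 2 | m] ω) := Real.add_one_le_exp _

lemma condExp_exp_sub_le_one [IsFiniteMeasure μ] (hm : m ≤ m0)
    (hsymm : CondSymmetric m μ ξ) (hξ : AEStronglyMeasurable ξ μ) (hbdd : ∀ᵐ ω ∂μ, |ξ ω| ≤ 1)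
    {l θ : ℝ} (hθ : Real.cosh l - 1 ≤ θ) :
    μ[fun ω => Real.exp (l * ξ ω - θ * μ[fun ω => ξ ω ^ 2 | m] ω) | m] ≤ᵐ[μ] 1 := by
  set q := μ[fun ω => ξ ω ^ 2 | m]
  have hθ₀ : 0 ≤ θ := (sub_nonneg.2 (Real.one_le_cosh l)).trans hθ
  have hexp := integrable_comp_of_ae_abs_le (φ := fun x => Real.exp (l * x)) (by fun_prop) hξ hbdd
  have hfactor : (fun ω => Real.exp (l * ξ ω - θ * q ω))
      = (fun ω => Real.exp (-(θ * q ω))) * fun ω => Real.exp (l * ξ ω) := by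
    ext ω
    rw [Pi.mul_apply, ← Real.exp_add, neg_add_eq_sub]
  have hq_nonneg : 0 ≤ᵐ[μ] q := condExp_nonneg (ae_of_all μ fun ω => sq_nonneg (ξ ω))
  have hdiscount_meas : StronglyMeasurable[m] (fun ω => Real.exp (-(θ * q ω))) :=
    Real.continuous_exp.comp_stronglyMeasurable (stronglyMeasurable_condExp.const_mul θ).neg
  have hprod : Integrable (fun ω => Real.exp (-(θ * q ω)) * Real.exp (l * ξ ω)) μ := by
    refine hexp.bdd_mul (c := 1) (hdiscount_meas.mono hm).aestronglyMeasurable ?_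
    filter_upwards [hq_nonneg] with ω hω
    rw [Real.norm_eq_abs, Real.abs_exp, Real.exp_le_one_iff, neg_nonpos]
    exact mul_nonneg hθ₀ hω
  rw [hfactor]
  filter_upwards [condExp_mul_of_stronglyMeasurable_left hdiscount_meas hprod hexp,
    hsymm.condExp_exp_le_exp_condExp_sq hm hξ hbdd hθ] with ω h_pull h_exp
  rw [h_pull, Pi.mul_apply, Pi.one_apply]
  calc Real.exp (-(θ * q ω)) * μ[fun ω => Real.exp (l * ξ ω) | m] ω
      ≤ Real.exp (-(θ * q ω)) * Real.exp (θ * q ω) := by gcongr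
    _ = 1 := by rw [← Real.exp_add, neg_add_cancel, Real.exp_zero]

end CondSymmetric

end ConditionalSymmetry

lemma Finset.sum_Icc_sub_pred (f : ℕ → ℝ) (n : ℕ) :
    ∑ k ∈ Finset.Icc 1 n, (f k - f (k - 1)) = f n - f 0 := by
  induction n with
  | zero => simp
  | succ n ih =>
    rw [Finset.sum_Icc_succ_top (by omega), ih, Nat.add_sub_cancel]
    ring

lemma Real.exp_mul_sub_mul_sum_eq_prod (l θ : ℝ) (x q : ℕ → ℝ) (n : ℕ) :
    exp (l * (x n - x 0) - θ * ∑ k ∈ Finset.Icc 1 n, q k)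
      = ∏ k ∈ Finset.Icc 1 n, exp (l * (x k - x (k - 1)) - θ * q k) := by
  rw [← exp_sum, Finset.sum_sub_distrib, ← Finset.mul_sum, ← Finset.mul_sum,
    Finset.sum_Icc_sub_pred]

lemma supermartingale_prod_Icc {Ω : Type*} {m0 : MeasurableSpace Ω} {μ : Measure Ω}
    [IsFiniteMeasure μ] {F : Filtration ℕ m0} {D : ℕ → Ω → ℝ} (hD : StronglyAdapted F D)
    (hD_nonneg : ∀ n, 0 ≤ᵐ[μ] D (n + 1)) (hD_bdd : ∀ n, ∃ C, ∀ᵐ ω ∂μ, ‖D (n + 1) ω‖ ≤ C)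
    (hD_le : ∀ n, μ[D (n + 1) | F n] ≤ᵐ[μ] 1) :
    Supermartingale (fun n => ∏ k ∈ Finset.Icc 1 n, D k) F μ := by
  set Y : ℕ → Ω → ℝ := fun n => ∏ k ∈ Finset.Icc 1 n, D k
  have hY_zero : Y 0 = 1 := by simp [Y]
  have hY_succ : ∀ n, Y (n + 1) = Y n * D (n + 1) :=
    fun n => Finset.prod_Icc_succ_top (by omega) D
  have hY_adapted : StronglyAdapted F Y := fun n =>
    Finset.stronglyMeasurable_prod _ fun k hk => (hD k).mono (F.mono (Finset.mem_Icc.1 hk).2)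
  have hD_meas : ∀ n, AEStronglyMeasurable (D (n + 1)) μ :=
    fun n => ((hD (n + 1)).mono (F.le _)).aestronglyMeasurable
  have hY_int : ∀ n, Integrable (Y n) μ := by
    intro n
    induction n with
    | zero => exact hY_zero ▸ integrable_const 1
    | succ n ih =>
      obtain ⟨C, hC⟩ := hD_bdd n
      exact hY_succ n ▸ ih.mul_bdd (hD_meas n) hC
  have hY_nonneg : ∀ n, 0 ≤ᵐ[μ] Y n := by
    intro n
    induction n with
    | zero => exact hY_zero ▸ ae_of_all μ fun _ => zero_le_one
    | succ n ih =>
      filter_upwards [ih, hD_nonneg n] with ω hY hD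
      rw [hY_succ, Pi.mul_apply]
      exact mul_nonneg hY hD
  refine supermartingale_nat hY_adapted hY_int fun n => ?_
  obtain ⟨C, hC⟩ := hD_bdd n
  rw [hY_succ]
  filter_upwards [condExp_mul_of_stronglyMeasurable_left (hY_adapted n)
      (hY_succ n ▸ hY_int (n + 1)) (Integrable.of_bound (hD_meas n) C hC),
    hD_le n, hY_nonneg n] with ω h_pull h_le h_nonneg
  rw [h_pull, Pi.mul_apply]
  exact mul_le_of_le_one_right h_nonneg h_le

/-- Lemma 2: for a conditionally symmetric martingale with jumps `ξ_k ≤ 1` a.s., and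
constants `λ ≥ 0`, `θ ≥ cosh(λ) − 1`, the process
`U_n = exp(λ S_n − θ Q_n)` (with `S_n = X_n − X_0` and `Q_n = Σ_{k=1}^n E[ξ_k² | F_{k−1}]`)
is a supermartingale. -/
theorem exp_minus_quadratic_variation_supermartingale
    {Ω : Type*} {m0 : MeasurableSpace Ω} {μ : Measure Ω} [IsProbabilityMeasure μ]
    {F : Filtration ℕ m0} {X : ℕ → Ω → ℝ}
    (hmart : Martingale X F μ)
    (hsymm : ∀ k : ℕ, 1 ≤ k → ∀ g : ℝ → ℝ, Measurable g →
      μ[fun ω => g (X k ω - X (k - 1) ω) | F (k - 1)]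
        =ᵐ[μ] μ[fun ω => g (-(X k ω - X (k - 1) ω)) | F (k - 1)])
    (hbdd : ∀ k : ℕ, 1 ≤ k → ∀ᵐ ω ∂μ, X k ω - X (k - 1) ω ≤ 1)
    {l θ : ℝ} (hl : 0 ≤ l) (hθ : Real.cosh l - 1 ≤ θ) :
    Supermartingale
      (fun n ω => Real.exp (l * (X n ω - X 0 ω)
        - θ * ∑ k ∈ Finset.Icc 1 n,
            (μ[fun ω' => (X k ω' - X (k - 1) ω') ^ 2 | F (k - 1)]) ω))
      F μ := by
  set ξ : ℕ → Ω → ℝ := fun k ω => X k ω - X (k - 1) ω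
  set q : ℕ → Ω → ℝ := fun k => μ[fun ω => ξ k ω ^ 2 | F (k - 1)]
  have hξ_meas : ∀ k, StronglyMeasurable[F k] (ξ k) := fun k =>
    (hmart.stronglyAdapted k).sub ((hmart.stronglyAdapted (k - 1)).mono (F.mono (k.sub_le 1)))
  have hξ_symm : ∀ k, 1 ≤ k → CondSymmetric (F (k - 1)) μ (ξ k) := hsymm
  have hξ_abs : ∀ n, ∀ᵐ ω ∂μ, |ξ (n + 1) ω| ≤ 1 := fun n =>
    (hξ_symm (n + 1) n.succ_pos).ae_abs_le (F.le _)
      ((hmart.integrable _).sub (hmart.integrable _)) (hbdd (n + 1) n.succ_pos)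
  have hU : ∀ n ω, Real.exp (l * (X n ω - X 0 ω) - θ * ∑ k ∈ Finset.Icc 1 n, q k ω)
      = (∏ k ∈ Finset.Icc 1 n, fun ω => Real.exp (l * ξ k ω - θ * q k ω)) ω := fun n ω => by
    rw [Finset.prod_apply]
    exact Real.exp_mul_sub_mul_sum_eq_prod l θ (X · ω) (q · ω) n
  show Supermartingale
    (fun n ω => Real.exp (l * (X n ω - X 0 ω) - θ * ∑ k ∈ Finset.Icc 1 n, q k ω)) F μ
  simp only [hU]
  refine supermartingale_prod_Icc (fun k => ?_)
    (fun n => ae_of_all μ fun ω => (Real.exp_pos _).le) (fun n => ⟨Real.exp l, ?_⟩) (fun n => ?_)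
  · exact Real.continuous_exp.comp_stronglyMeasurable (((hξ_meas k).const_mul l).sub
      ((stronglyMeasurable_condExp.mono (F.mono (k.sub_le 1))).const_mul θ))
  · have hθ₀ : 0 ≤ θ := (sub_nonneg.2 (Real.one_le_cosh l)).trans hθ
    filter_upwards [hbdd (n + 1) n.succ_pos,
      condExp_nonneg (m := F n) (ae_of_all μ fun ω => sq_nonneg (ξ (n + 1) ω))] with ω hξ hq
    rw [Real.norm_eq_abs, Real.abs_exp, Real.exp_le_exp]
    have hlξ : l * ξ (n + 1) ω ≤ l := mul_le_of_le_one_right hl hξ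
    have hθq : 0 ≤ θ * q (n + 1) ω := mul_nonneg hθ₀ hq
    linarith
  · exact (hξ_symm (n + 1) n.succ_pos).condExp_exp_sub_le_one (F.le n)
      ((hξ_meas (n + 1)).mono (F.le _)).aestronglyMeasurable (hξ_abs n) hθ
end
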